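/- arXiv:1406.1813 — 2 statements merged into one kernel-verified Lean document; each statement's English description precedes it below -/
import Mathlib

section
/- Let k, λ, ε₁, ε₂ be real numbers with k ≠ 0 and ε₁ ≠ 0, and set ε = −k ε₁/81, a = 18/k, b = 81 ε₂/k², c = −9(ε₂+2)/k, ν = (3λ − 6 − 3k) ε₂/k². Let L : ℝ³ → ℝ³ be the linear map L(p,q,r) = (p/3, k q/27, (2q − r)/3) (the linear part of Φ). Then for every (u,v,w) ∈ ℝ³ one has the vector-field conjugacy identity (−9/k) · L(F(u,v,w)) = G(Φ(u,v,w)); that is, after the affine coordinate change Φ and rescaling time by −k/9, the Koper model becomes the singular Hopf normal form with the substituted parameters. -/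
noncomputable section

/-- The Koper model vector field. -/
def koperF (k lam e1 e2 : ℝ) (p : ℝ × ℝ × ℝ) : ℝ × ℝ × ℝ :=
  ((k * p.2.1 - p.1 ^ 3 + 3 * p.1 - lam) / e1,
   p.1 - 2 * p.2.1 + p.2.2,
   e2 * (p.2.1 - p.2.2))

/-- The singular Hopf normal form vector field. -/
def shG (e nu a b c : ℝ) (p : ℝ × ℝ × ℝ) : ℝ × ℝ × ℝ :=
  ((p.2.1 - p.1 ^ 3 - p.1 ^ 2) / e,
   p.2.2 - p.1,
   -nu - a * p.1 - b * p.2.1 - c * p.2.2)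

/-- The affine coordinate change Φ. -/
def phiMap (k lam : ℝ) (p : ℝ × ℝ × ℝ) : ℝ × ℝ × ℝ :=
  ((p.1 - 1) / 3, (k * p.2.1 - lam + 2) / 27, (2 * p.2.1 - p.2.2 - 1) / 3)

/-- The linear part L of the affine map Φ. -/
def linL (k : ℝ) (p : ℝ × ℝ × ℝ) : ℝ × ℝ × ℝ :=
  (p.1 / 3, k * p.2.1 / 27, (2 * p.2.1 - p.2.2) / 3)

/-- After the affine coordinate change Φ and rescaling time by −k/9, the Koper model
becomes the singular Hopf normal form with the substituted parameters. -/
theorem koper_conjugate_to_singular_hopf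
    (k lam e1 e2 : ℝ) (hk : k ≠ 0) (he1 : e1 ≠ 0) :
    ∀ p : ℝ × ℝ × ℝ,
      (-9 / k) • linL k (koperF k lam e1 e2 p) =
        shG (-k * e1 / 81) ((3 * lam - 6 - 3 * k) * e2 / k ^ 2)
          (18 / k) (81 * e2 / k ^ 2) (-9 * (e2 + 2) / k)
          (phiMap k lam p) := by
  rintro ⟨u, v, w⟩
  simp only [koperF, shG, phiMap, linL, Prod.smul_mk, smul_eq_mul, Prod.mk.injEq]
  refine ⟨?_, ?_, ?_⟩ <;> field_simp <;> ring
end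
end

section
/- Let k, λ, ε₁, ε₂ be real numbers with k ≠ 0 and ε₁ ≠ 0, and set ε = −k ε₁/81, a = 18/k, b = 81 ε₂/k², c = −9(ε₂+2)/k, ν = (3λ − 6 − 3k) ε₂/k². Suppose (u,v,w) : ℝ → ℝ³ is differentiable and satisfies (u,v,w)'(t) = F(u(t),v(t),w(t)) for all t (i.e., it is a solution of the Koper model). Then the curve X : ℝ → ℝ³ defined by X(s) = Φ(u(−9s/k), v(−9s/k), w(−9s/k)) is differentiable and satisfies X'(s) = G(X(s)) for all s; that is, X is a solution of the singular Hopf normal form with the substituted parameters. -/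
noncomputable section

/-- If (u,v,w) is a solution of the Koper model, then the time-rescaled image curve
X(s) = Φ((u,v,w)(−9s/k)) is a differentiable solution of the singular Hopf normal
form with the substituted parameters. -/
theorem koper_solution_to_singular_hopf_solution
    (k lam e1 e2 : ℝ) (hk : k ≠ 0) (he1 : e1 ≠ 0)
    (U : ℝ → ℝ × ℝ × ℝ)
    (hdiff : Differentiable ℝ U)
    (hU : ∀ t : ℝ, HasDerivAt U (koperF k lam e1 e2 (U t)) t) :
    Differentiable ℝ (fun s : ℝ => phiMap k lam (U (-9 * s / k))) ∧
      ∀ s : ℝ,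
        HasDerivAt (fun s : ℝ => phiMap k lam (U (-9 * s / k)))
          (shG (-k * e1 / 81) ((3 * lam - 6 - 3 * k) * e2 / k ^ 2)
            (18 / k) (81 * e2 / k ^ 2) (-9 * (e2 + 2) / k)
            (phiMap k lam (U (-9 * s / k)))) s := by
  have key : ∀ s : ℝ,
      HasDerivAt (fun s : ℝ => phiMap k lam (U (-9 * s / k)))
        (shG (-k * e1 / 81) ((3 * lam - 6 - 3 * k) * e2 / k ^ 2)
          (18 / k) (81 * e2 / k ^ 2) (-9 * (e2 + 2) / k)
          (phiMap k lam (U (-9 * s / k)))) s := by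
    intro s
    have h1 : HasDerivAt (fun s : ℝ => -9 * s / k) (-9 / k) s := by
      simpa using ((hasDerivAt_id s).const_mul (-9)).div_const k
    have h2 : HasDerivAt (fun s : ℝ => U (-9 * s / k))
        ((-9 / k) • koperF k lam e1 e2 (U (-9 * s / k))) s :=
      (hU (-9 * s / k)).scomp s h1
    set p := U (-9 * s / k) with hp
    have hu : HasDerivAt (fun s : ℝ => (U (-9 * s / k)).1)
        ((-9 / k) * ((k * p.2.1 - p.1 ^ 3 + 3 * p.1 - lam) / e1)) s := by
      simpa [koperF, Prod.smul_def, smul_eq_mul, Function.comp_def] using hasFDerivAt_fst.comp_hasDerivAt s h2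
    have hv : HasDerivAt (fun s : ℝ => (U (-9 * s / k)).2.1)
        ((-9 / k) * (p.1 - 2 * p.2.1 + p.2.2)) s := by
      simpa [koperF, Prod.smul_def, smul_eq_mul, Function.comp_def] using hasFDerivAt_fst.comp_hasDerivAt s (hasFDerivAt_snd.comp_hasDerivAt s h2)
    have hw : HasDerivAt (fun s : ℝ => (U (-9 * s / k)).2.2)
        ((-9 / k) * (e2 * (p.2.1 - p.2.2))) s := by
      simpa [koperF, Prod.smul_def, smul_eq_mul, Function.comp_def] using hasFDerivAt_snd.comp_hasDerivAt s (hasFDerivAt_snd.comp_hasDerivAt s h2)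
    have hX1 : HasDerivAt (fun s : ℝ => ((U (-9 * s / k)).1 - 1) / 3)
        ((-9 / k) * ((k * p.2.1 - p.1 ^ 3 + 3 * p.1 - lam) / e1) / 3) s :=
      (hu.sub_const 1).div_const 3
    have hX2 : HasDerivAt (fun s : ℝ => (k * (U (-9 * s / k)).2.1 - lam + 2) / 27)
        ((k * ((-9 / k) * (p.1 - 2 * p.2.1 + p.2.2))) / 27) s :=
      ((hv.const_mul k).sub_const lam |>.add_const 2).div_const 27
    have hX3 : HasDerivAt
        (fun s : ℝ => (2 * (U (-9 * s / k)).2.1 - (U (-9 * s / k)).2.2 - 1) / 3)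
        ((2 * ((-9 / k) * (p.1 - 2 * p.2.1 + p.2.2))
          - (-9 / k) * (e2 * (p.2.1 - p.2.2))) / 3) s :=
      (((hv.const_mul 2).sub hw).sub_const 1).div_const 3
    have hprod := hX1.prodMk (hX2.prodMk hX3)
    have heq : (shG (-k * e1 / 81) ((3 * lam - 6 - 3 * k) * e2 / k ^ 2)
          (18 / k) (81 * e2 / k ^ 2) (-9 * (e2 + 2) / k) (phiMap k lam p))
        = ((-9 / k) * ((k * p.2.1 - p.1 ^ 3 + 3 * p.1 - lam) / e1) / 3,
           (k * ((-9 / k) * (p.1 - 2 * p.2.1 + p.2.2))) / 27,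
           (2 * ((-9 / k) * (p.1 - 2 * p.2.1 + p.2.2))
            - (-9 / k) * (e2 * (p.2.1 - p.2.2))) / 3) := by
      simp only [shG, phiMap, Prod.mk.injEq]
      refine ⟨?_, ?_, ?_⟩ <;> field_simp <;> ring
    rw [heq]
    exact hprod
  exact ⟨fun s => (key s).differentiableAt, key⟩
end
end
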